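/- Let Γ be a Coxeter graph of small type, let A be a closed subset of Φ^+, and let E = {w∈W : Φ_w ⊆ A}. Then: (i) E is finite; (ii) if u<v and v∈E then u∈E; and (iii) if v∈W and s,t∈S satisfy l(vs)=l(vt)=l(v)+1 and vs,vt∈E, then v·prod(s,t;m_{s,t})∈E. -/

import Mathlib

/-!
In small type, two distinct simple reflections either commute or satisfy the braid relation
`s t s = t s t`, and `s_t α_s` is `α_s` or `α_s + α_t` accordingly; with this, induction on length
shows that `w α_s` is a positive root exactly when `l(w s) > l(w)`. Hence
`Φ_{ws} = Φ_w ∪ {w α_s}` whenever `l(w s) > l(w)`, so `|Φ_w| = l(w)`, which bounds the length of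
the elements of `E` by `|A|` (i), and `Φ_u ⊆ Φ_v` for `u < v` (ii). For (iii),
`Φ_{v·prod(s,t;m)}` is `Φ_{vs} ∪ {v α_t}` when `m = 2` and `Φ_{vs} ∪ {v α_t, v α_s + v α_t}` when
`m = 3`; in the latter case `⟨v α_s, v α_t⟩ = -1`, so the missing root lies in `A` by closedness.
-/

noncomputable section

namespace ArtinInj

/-- `altProd a b m` is the alternating product `prod(a,b;m) = abab⋯` with `m` factors. -/
def altProd {G : Type*} [Monoid G] (a b : G) : ℕ → G
  | 0 => 1
  | n + 1 => a * altProd b a n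

variable {S : Type} [DecidableEq S] [Fintype S]

/-- The braid relations on the free monoid over `S`.  Here `M s t = 0` encodes
`m_{s,t} = ∞`. -/
def braidRel (M : CoxeterMatrix S) (u v : FreeMonoid S) : Prop :=
  ∃ s t : S, s ≠ t ∧ M s t ≠ 0 ∧
    u = altProd (FreeMonoid.of s) (FreeMonoid.of t) (M s t) ∧
    v = altProd (FreeMonoid.of t) (FreeMonoid.of s) (M s t)

/-- The Artin monoid `G_Γ⁺` of a Coxeter matrix. -/
abbrev ArtinMonoid (M : CoxeterMatrix S) : Type := PresentedMonoid (braidRel M)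

/-- The generators `σ_s` of the Artin monoid. -/
def sigma (M : CoxeterMatrix S) (s : S) : ArtinMonoid M := PresentedMonoid.of (braidRel M) s

/-- The braid relators in the free group over `S`. -/
def artinRels (M : CoxeterMatrix S) : Set (FreeGroup S) :=
  {r | ∃ s t : S, s ≠ t ∧ M s t ≠ 0 ∧
    r = altProd (FreeGroup.of s) (FreeGroup.of t) (M s t) *
        (altProd (FreeGroup.of t) (FreeGroup.of s) (M s t))⁻¹}

/-- The Artin group `G_Γ` of a Coxeter matrix. -/
abbrev ArtinGroup (M : CoxeterMatrix S) : Type := PresentedGroup (artinRels M)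

/-- The generators `σ_s` of the Artin group. -/
def agen (M : CoxeterMatrix S) (s : S) : ArtinGroup M := PresentedGroup.of s

/-- The partial order on the Artin monoid: `g < h ⟺ ∃ f, g f = h`. -/
def mle {M : CoxeterMatrix S} (g h : ArtinMonoid M) : Prop := ∃ f, g * f = h

/-- A Coxeter matrix is of small type when all off-diagonal entries are 2 or 3. -/
def SmallType (M : CoxeterMatrix S) : Prop := ∀ s t : S, s ≠ t → M s t = 2 ∨ M s t = 3

/-- `m ≥ 3` in `{2,3,...,∞}`, where `∞` is encoded by `0`. -/
def BigEntry (m : ℕ) : Prop := m = 0 ∨ 3 ≤ m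

/-- A Coxeter matrix has no triangle when there are no three distinct vertices with
pairwise entries `≥ 3`. -/
def NoTriangle (M : CoxeterMatrix S) : Prop :=
  ¬ ∃ s t r : S, s ≠ t ∧ s ≠ r ∧ t ≠ r ∧
      BigEntry (M s t) ∧ BigEntry (M s r) ∧ BigEntry (M t r)

variable {W : Type} [Group W]

/-- The partial order `u < v` on the Coxeter group: `l(v) = l(u) + l(u⁻¹ v)`. -/
def wle {M : CoxeterMatrix S} (cs : CoxeterSystem M W) (u v : W) : Prop :=
  cs.length v = cs.length u + cs.length (u⁻¹ * v)

/-- The simple root `α_s`. -/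
def sroot (s : S) : S → ℝ := Pi.single s 1

/-- The entries `⟨α_s, α_t⟩ = -2 cos (π / m_{s,t})` of the canonical bilinear form
(equal to `-2` when `m_{s,t} = ∞`, encoded by `M s t = 0`). -/
def formEnt (M : CoxeterMatrix S) (s t : S) : ℝ :=
  if M s t = 0 then -2 else -2 * Real.cos (Real.pi / (M s t : ℝ))

/-- The canonical symmetric bilinear form `⟨·,·⟩` on `U = ℝ^S`. -/
def form (M : CoxeterMatrix S) (x v : S → ℝ) : ℝ :=
  ∑ s : S, ∑ t : S, x s * v t * formEnt M s t

/-- `ρ` is the canonical (geometric) representation of the Coxeter system. -/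
def IsGeomRep (M : CoxeterMatrix S) (cs : CoxeterSystem M W)
    (ρ : W →* ((S → ℝ) →ₗ[ℝ] (S → ℝ))) : Prop :=
  ∀ (s : S) (x : S → ℝ), ρ (cs.simple s) x = x - form M (sroot s) x • sroot s

/-- The root system `Φ = {w α_s}`. -/
def Phi (ρ : W →* ((S → ℝ) →ₗ[ℝ] (S → ℝ))) : Set (S → ℝ) :=
  {u | ∃ (w : W) (s : S), u = ρ w (sroot s)}

/-- The positive roots `Φ⁺`. -/
def PhiPlus (ρ : W →* ((S → ℝ) →ₗ[ℝ] (S → ℝ))) : Set (S → ℝ) :=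
  {u | u ∈ Phi ρ ∧ ∀ s : S, 0 ≤ u s}

/-- The negative roots `Φ⁻ = -Φ⁺`. -/
def PhiMinus (ρ : W →* ((S → ℝ) →ₗ[ℝ] (S → ℝ))) : Set (S → ℝ) :=
  {u | -u ∈ PhiPlus ρ}

/-- The inversion set `Φ_w = {β ∈ Φ⁺ : w⁻¹ β ∈ Φ⁻}`. -/
def invSet (ρ : W →* ((S → ℝ) →ₗ[ℝ] (S → ℝ))) (w : W) : Set (S → ℝ) :=
  {u | u ∈ PhiPlus ρ ∧ ρ w⁻¹ u ∈ PhiMinus ρ}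

/-- The depth `dp(β) = min { l(w) : w β ∈ Φ⁻ }` of a positive root. -/
def dp {M : CoxeterMatrix S} (cs : CoxeterSystem M W)
    (ρ : W →* ((S → ℝ) →ₗ[ℝ] (S → ℝ))) (u : S → ℝ) : ℕ :=
  sInf {l : ℕ | ∃ w : W, ρ w u ∈ PhiMinus ρ ∧ cs.length w = l}

/-- Closed subsets of `Φ⁺`. -/
def ClosedSub (M : CoxeterMatrix S) (ρ : W →* ((S → ℝ) →ₗ[ℝ] (S → ℝ)))
    (A : Set (S → ℝ)) : Prop :=
  A ⊆ PhiPlus ρ ∧ A.Finite ∧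
    (∀ a ∈ A, ∀ b ∈ A, -1 ≤ form M a b) ∧
    (∀ a ∈ A, ∀ b ∈ A, form M a b = -1 → a + b ∈ A)

/-- The field `K = ℚ(x,y)` of rational functions in two variables over `ℚ`. -/
abbrev KK : Type := FractionRing (MvPolynomial (Fin 2) ℚ)

/-- The variable `x` of `K`. -/
def Xv : KK := algebraMap (MvPolynomial (Fin 2) ℚ) KK (MvPolynomial.X 0)

/-- The variable `y` of `K`. -/
def Yv : KK := algebraMap (MvPolynomial (Fin 2) ℚ) KK (MvPolynomial.X 1)

/-- The image in `K` of a polynomial of `ℚ[y]`. -/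
def Ty (p : Polynomial ℚ) : KK := Polynomial.eval₂ (Rat.castHom KK) Yv p

/-- The `K`-vector space `V` with basis `{e_β : β ∈ Φ⁺}`. -/
abbrev VV (ρ : W →* ((S → ℝ) →ₗ[ℝ] (S → ℝ))) : Type := ↥(PhiPlus ρ) →₀ KK

/-- The basis vectors `e_β` of `V` (defined to be `0` for `β ∉ Φ⁺`). -/
def ebase (ρ : W →* ((S → ℝ) →ₗ[ℝ] (S → ℝ))) (u : S → ℝ) : VV ρ := by
  haveI := Classical.dec (u ∈ PhiPlus ρ)
  exact if h : u ∈ PhiPlus ρ then Finsupp.single (⟨u, h⟩ : ↥(PhiPlus ρ)) (1 : KK) else 0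

/-- `φ : S → End(V)` is the family of linear maps `φ_s` of Section 3 of the paper. -/
def PhiMapSpec (M : CoxeterMatrix S) (ρ : W →* ((S → ℝ) →ₗ[ℝ] (S → ℝ)))
    (φ : S → Module.End KK (VV ρ)) : Prop :=
  ∀ s : S, ∀ u ∈ PhiPlus ρ,
    (u = sroot s → φ s (ebase ρ u) = 0) ∧
    (form M (sroot s) u = 0 → φ s (ebase ρ u) = ebase ρ u) ∧
    (0 < form M (sroot s) u → u ≠ sroot s →
      φ s (ebase ρ u) = Yv • ebase ρ (u - form M (sroot s) u • sroot s)) ∧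
    (form M (sroot s) u < 0 →
      φ s (ebase ρ u) = (1 - Yv) • ebase ρ u + ebase ρ (u - form M (sroot s) u • sroot s))

/-- `T : S × Φ⁺ → ℚ[y]` is the family of polynomials `T(s,β)` defined by (D1)–(D9),
by induction on the depth of `β`; the recursion may be applied with any `t ∈ S`
such that `dp(t β) = dp(β) - 1`. -/
def TSpec (M : CoxeterMatrix S) (cs : CoxeterSystem M W)
    (ρ : W →* ((S → ℝ) →ₗ[ℝ] (S → ℝ))) (T : S → (S → ℝ) → Polynomial ℚ) : Prop :=
  (∀ s : S, T s (sroot s) = Polynomial.X ^ 2) ∧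
  (∀ s t : S, t ≠ s → T s (sroot t) = 0) ∧
  (∀ s t : S, ∀ u ∈ PhiPlus ρ, 2 ≤ dp cs ρ u →
    0 < form M (sroot t) u → dp cs ρ (ρ (cs.simple t) u) = dp cs ρ u - 1 →
    (0 < form M (sroot s) u →
      T s u = Polynomial.X ^ (dp cs ρ u) * (Polynomial.X - 1)) ∧
    (form M (sroot s) u = 0 → form M (sroot s) (sroot t) = 0 →
      T s u = Polynomial.X * T s (u - form M (sroot t) u • sroot t)) ∧
    (form M (sroot s) u = 0 → form M (sroot s) (sroot t) = -1 →
      T s u = (Polynomial.X - 1) * T s (u - form M (sroot t) u • sroot t) +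
        Polynomial.X * T t (u - form M (sroot t) u • sroot s - form M (sroot t) u • sroot t)) ∧
    (form M (sroot s) u < 0 → form M (sroot s) (sroot t) = 0 →
      T s u = Polynomial.X * T s (u - form M (sroot t) u • sroot t)) ∧
    (form M (sroot s) u < 0 → form M (sroot s) (sroot t) = -1 →
      -(form M (sroot s) u) < form M (sroot t) u →
      T s u = (Polynomial.X - 1) * T s (u - form M (sroot t) u • sroot t) +
        Polynomial.X * T t (u - (form M (sroot t) u + form M (sroot s) u) • sroot s
          - form M (sroot t) u • sroot t)) ∧
    (form M (sroot s) u < 0 → form M (sroot s) (sroot t) = -1 →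
      -(form M (sroot s) u) = form M (sroot t) u →
      T s u = T t (u - form M (sroot t) u • sroot t) +
        (Polynomial.X - 1) * T s (u - form M (sroot t) u • sroot t)) ∧
    (form M (sroot s) u < 0 → form M (sroot s) (sroot t) = -1 →
      form M (sroot t) u < -(form M (sroot s) u) →
      T s u = Polynomial.X * T s (u - form M (sroot t) u • sroot t) +
        T t (u - form M (sroot t) u • sroot t) +
        Polynomial.X ^ (dp cs ρ u - 1) * (1 - Polynomial.X)))

/-- `ψ : S → End(V)` is the family of linear maps `ψ_s(e_β) = φ_s(e_β) + x T(s,β) e_{α_s}`. -/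
def PsiSpec (M : CoxeterMatrix S) (ρ : W →* ((S → ℝ) →ₗ[ℝ] (S → ℝ)))
    (T : S → (S → ℝ) → Polynomial ℚ) (ψ : S → Module.End KK (VV ρ)) : Prop :=
  ∀ s : S, ∀ u ∈ PhiPlus ρ,
    (u = sroot s → ψ s (ebase ρ u) = (Xv * Ty (T s u)) • ebase ρ (sroot s)) ∧
    (form M (sroot s) u = 0 →
      ψ s (ebase ρ u) = ebase ρ u + (Xv * Ty (T s u)) • ebase ρ (sroot s)) ∧
    (0 < form M (sroot s) u → u ≠ sroot s →
      ψ s (ebase ρ u) = Yv • ebase ρ (u - form M (sroot s) u • sroot s) +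
        (Xv * Ty (T s u)) • ebase ρ (sroot s)) ∧
    (form M (sroot s) u < 0 →
      ψ s (ebase ρ u) = (1 - Yv) • ebase ρ u +
        ebase ρ (u - form M (sroot s) u • sroot s) +
        (Xv * Ty (T s u)) • ebase ρ (sroot s))

/-- The set `σ_s ∗ A` (Lemma 4.4 of the paper). -/
def starSet (M : CoxeterMatrix S) (ρ : W →* ((S → ℝ) →ₗ[ℝ] (S → ℝ)))
    (s : S) (A : Set (S → ℝ)) : Set (S → ℝ) :=
  {sroot s} ∪
  {u | u ∈ PhiPlus ρ ∧ form M (sroot s) u = 0 ∧ u ∈ A} ∪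
  {u | u ∈ PhiPlus ρ ∧ 0 < form M (sroot s) u ∧ u ≠ sroot s ∧
        u - form M (sroot s) u • sroot s ∈ A} ∪
  {u | u ∈ PhiPlus ρ ∧ form M (sroot s) u < 0 ∧ u ∈ A ∧
        u - form M (sroot s) u • sroot s ∈ A}

end ArtinInj

namespace CoxeterSystem

variable {S W : Type} [Group W] {M : CoxeterMatrix S} (cs : CoxeterSystem M W)

local prefix:100 "s" => cs.simple
local prefix:100 "ℓ" => cs.length

lemma simple_mul_simple_comm_of_eq_two {i j : S} (h : M i j = 2) : s i * s j = s j * s i := by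
  simpa [wordProd, braidWord, alternatingWord, h, M.symmetric j i]
    using cs.wordProd_braidWord_eq i j

lemma simple_braid_of_eq_three {i j : S} (h : M i j = 3) :
    s i * s j * s i = s j * s i * s j := by
  simpa [wordProd, braidWord, alternatingWord, h, M.symmetric j i, mul_assoc]
    using (cs.wordProd_braidWord_eq i j).symm

lemma induction_on_length {p : W → Prop} (w : W) (one : p 1)
    (mul_simple : ∀ w i, ℓ w < ℓ (w * s i) → (∀ v, ℓ v ≤ ℓ w → p v) → p (w * s i)) : p w := by
  induction hn : ℓ w using Nat.strong_induction_on generalizing w with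
  | _ n ih =>
    obtain rfl | hw := eq_or_ne w 1
    · exact one
    obtain ⟨i, hi⟩ := cs.exists_rightDescent_of_ne_one hw
    rw [cs.isRightDescent_iff] at hi
    rw [← cs.simple_mul_simple_cancel_right (w := w) i]
    exact mul_simple _ i (by rw [cs.simple_mul_simple_cancel_right]; omega)
      fun v hv => ih _ (by omega) v rfl

lemma length_lt_length_mul_simple_of_eq_two {w : W} {t i : S} (h : M t i = 2)
    (hi : ℓ (w * s t) < ℓ (w * s t * s i)) (ht : ℓ w < ℓ (w * s t)) : ℓ w < ℓ (w * s i) := by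
  have hw : w * s t * s i = w * s i * s t := by
    rw [mul_assoc, cs.simple_mul_simple_comm_of_eq_two h, ← mul_assoc]
  rw [hw] at hi
  rcases cs.length_mul_simple w i with _ | _ <;>
    rcases cs.length_mul_simple (w * s i) t with _ | _ <;> omega

lemma length_lt_length_mul_simple_of_eq_three {w : W} {t i : S} (h : M i t = 3)
    (hi : ℓ (w * s t) < ℓ (w * s t * s i)) (ht : ℓ w < ℓ (w * s t)) (hwi : ℓ (w * s i) < ℓ w) :
    ℓ (w * s i) < ℓ (w * s i * s t) := by
  have hw : w * s i * s t * s i * s t = w * s t * s i := by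
    rw [mul_assoc w, mul_assoc w, cs.simple_braid_of_eq_three h]
    simp only [mul_assoc, cs.simple_mul_simple_self, mul_one]
  rw [← hw] at hi
  rcases cs.length_mul_simple (w * s i) t with _ | _ <;>
    rcases cs.length_mul_simple (w * s i * s t) i with _ | _ <;>
    rcases cs.length_mul_simple (w * s i * s t * s i) t with _ | _ <;> omega

lemma finite_setOf_length_le [Finite S] (n : ℕ) : {w : W | ℓ w ≤ n}.Finite := by
  refine ((List.finite_length_le S n).image cs.wordProd).subset fun w hw => ?_
  obtain ⟨ω, hω, rfl⟩ := cs.exists_isReduced w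
  exact ⟨ω, by rwa [Set.mem_ofPred_eq, ← hω.eq], rfl⟩

end CoxeterSystem

namespace ArtinInj

section Form

variable {S : Type} {M : CoxeterMatrix S}

lemma formEnt_comm (s t : S) : formEnt M s t = formEnt M t s := by
  rw [formEnt, formEnt, M.symmetric]

lemma formEnt_self (s : S) : formEnt M s s = 2 := by
  simp [formEnt]

lemma formEnt_of_eq_two {s t : S} (h : M s t = 2) : formEnt M s t = 0 := by
  simp [formEnt, h]

lemma formEnt_of_eq_three {s t : S} (h : M s t = 3) : formEnt M s t = -1 := by
  norm_num [formEnt, h]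

variable [Fintype S]

lemma form_comm (x y : S → ℝ) : form M x y = form M y x := by
  rw [form, form, Finset.sum_comm]
  simp only [formEnt_comm, mul_comm (x _)]

lemma form_sub_left (x y z : S → ℝ) : form M (x - y) z = form M x z - form M y z := by
  simp only [form, Pi.sub_apply, sub_mul, Finset.sum_sub_distrib]

lemma form_smul_left (c : ℝ) (x y : S → ℝ) : form M (c • x) y = c * form M x y := by
  simp only [form, Pi.smul_apply, smul_eq_mul, Finset.mul_sum, mul_assoc]

lemma form_sub_right (x y z : S → ℝ) : form M x (y - z) = form M x y - form M x z := by
  rw [form_comm, form_sub_left, form_comm y, form_comm z]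

lemma form_smul_right (c : ℝ) (x y : S → ℝ) : form M x (c • y) = c * form M x y := by
  rw [form_comm, form_smul_left, form_comm y]

lemma form_sroot_sroot [DecidableEq S] (s t : S) :
    form M (sroot s) (sroot t) = formEnt M s t := by
  simp [form, sroot, Pi.single_apply]

end Form

section Roots

variable {S W : Type} [Group W] {ρ : W →* ((S → ℝ) →ₗ[ℝ] (S → ℝ))}

lemma apply_inv_apply (w : W) (x : S → ℝ) : ρ w (ρ w⁻¹ x) = x := by
  rw [← Module.End.mul_apply, ← map_mul, mul_inv_cancel, map_one, Module.End.one_apply]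

lemma inv_apply_apply (w : W) (x : S → ℝ) : ρ w⁻¹ (ρ w x) = x := by
  rw [← Module.End.mul_apply, ← map_mul, inv_mul_cancel, map_one, Module.End.one_apply]

variable [DecidableEq S]

lemma apply_mem_Phi (w : W) {u : S → ℝ} (hu : u ∈ Phi ρ) : ρ w u ∈ Phi ρ := by
  obtain ⟨v, i, rfl⟩ := hu
  exact ⟨w * v, i, by rw [map_mul, Module.End.mul_apply]⟩

lemma mem_PhiMinus_iff {u : S → ℝ} : u ∈ PhiMinus ρ ↔ -u ∈ PhiPlus ρ := Iff.rfl

lemma sroot_nonneg (i : S) : 0 ≤ sroot i := by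
  simp [sroot]

lemma sroot_mem_PhiPlus (i : S) : sroot i ∈ PhiPlus ρ :=
  ⟨⟨1, i, by simp⟩, sroot_nonneg i⟩

lemma ne_zero_of_mem_Phi {u : S → ℝ} (hu : u ∈ Phi ρ) : u ≠ 0 := by
  obtain ⟨w, i, rfl⟩ := hu
  intro h
  have := inv_apply_apply (ρ := ρ) w (sroot i)
  rw [h, map_zero] at this
  simpa [sroot] using congrFun this i

lemma notMem_PhiMinus_of_mem_PhiPlus {u : S → ℝ} (hu : u ∈ PhiPlus ρ) : u ∉ PhiMinus ρ := by
  intro hu'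
  refine ne_zero_of_mem_Phi hu.1 (le_antisymm ?_ hu.2)
  exact fun j => by simpa using hu'.2 j

lemma invSet_one : invSet ρ 1 = ∅ := by
  ext u
  simpa [invSet] using notMem_PhiMinus_of_mem_PhiPlus

lemma apply_sroot_notMem_invSet (w : W) (i : S) : ρ w (sroot i) ∉ invSet ρ w := fun h =>
  notMem_PhiMinus_of_mem_PhiPlus (sroot_mem_PhiPlus i) (inv_apply_apply w (sroot i) ▸ h.2)

end Roots

namespace IsGeomRep

variable {S W : Type} [Group W] [DecidableEq S] [Fintype S] {M : CoxeterMatrix S}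
  {cs : CoxeterSystem M W} {ρ : W →* ((S → ℝ) →ₗ[ℝ] (S → ℝ))}

local prefix:100 "s" => cs.simple
local prefix:100 "ℓ" => cs.length

lemma apply_sroot (hρ : IsGeomRep M cs ρ) (i j : S) :
    ρ (s i) (sroot j) = sroot j - formEnt M i j • sroot i := by
  rw [hρ, form_sroot_sroot]

lemma apply_sroot_self (hρ : IsGeomRep M cs ρ) (i : S) : ρ (s i) (sroot i) = -sroot i := by
  rw [hρ.apply_sroot, formEnt_self, two_smul, sub_add_cancel_left]

lemma apply_sroot_of_eq_two (hρ : IsGeomRep M cs ρ) {i j : S} (h : M i j = 2) :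
    ρ (s i) (sroot j) = sroot j := by
  rw [hρ.apply_sroot, formEnt_of_eq_two h, zero_smul, sub_zero]

lemma apply_sroot_of_eq_three (hρ : IsGeomRep M cs ρ) {i j : S} (h : M i j = 3) :
    ρ (s i) (sroot j) = sroot j + sroot i := by
  rw [hρ.apply_sroot, formEnt_of_eq_three h, neg_one_smul, sub_neg_eq_add]

lemma form_apply_simple (hρ : IsGeomRep M cs ρ) (i : S) (x y : S → ℝ) :
    form M (ρ (s i) x) (ρ (s i) y) = form M x y := by
  simp only [hρ i, form_sub_left, form_sub_right, form_smul_left, form_smul_right,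
    form_sroot_sroot, formEnt_self, form_comm x (sroot i)]
  ring

lemma form_apply (hρ : IsGeomRep M cs ρ) (w : W) (x y : S → ℝ) :
    form M (ρ w x) (ρ w y) = form M x y := by
  induction w using cs.simple_induction generalizing x y with
  | simple i => exact hρ.form_apply_simple i x y
  | one => simp
  | mul w₁ w₂ h₁ h₂ => simp only [map_mul, Module.End.mul_apply, h₁, h₂]

lemma form_self_of_mem_Phi (hρ : IsGeomRep M cs ρ) {u : S → ℝ} (hu : u ∈ Phi ρ) :
    form M u u = 2 := by
  obtain ⟨w, i, rfl⟩ := hu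
  rw [hρ.form_apply, form_sroot_sroot, formEnt_self]

lemma neg_mem_Phi (hρ : IsGeomRep M cs ρ) {u : S → ℝ} (hu : u ∈ Phi ρ) : -u ∈ Phi ρ := by
  obtain ⟨w, i, rfl⟩ := hu
  exact ⟨w * s i, i, by rw [map_mul, Module.End.mul_apply, hρ.apply_sroot_self, map_neg]⟩

lemma eq_sroot_of_mem_PhiPlus (hρ : IsGeomRep M cs ρ) {u : S → ℝ} {i : S} (hu : u ∈ PhiPlus ρ)
    (h : ∀ j ≠ i, u j = 0) : u = sroot i := by
  have hu_eq : u = u i • sroot i := by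
    ext j
    by_cases hj : j = i
    · simp [hj, sroot]
    · simp [h j hj, sroot, hj]
  have hform := hρ.form_self_of_mem_Phi hu.1
  rw [hu_eq, form_smul_left, form_smul_right, form_sroot_sroot, formEnt_self] at hform
  have hui : u i = 1 := by nlinarith [hu.2 i]
  rwa [hui, one_smul] at hu_eq

lemma nonneg_of_length_lt (hsmall : SmallType M) (hρ : IsGeomRep M cs ρ) {w : W} {i : S}
    (h : ℓ w < ℓ (w * s i)) : 0 ≤ ρ w (sroot i) := by
  induction w using cs.induction_on_length generalizing i with
  | one => simpa using sroot_nonneg i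
  | mul_simple w t ht ih =>
    have hti : t ≠ i := by
      rintro rfl
      rw [cs.simple_mul_simple_cancel_right] at h
      omega
    rw [map_mul, Module.End.mul_apply]
    rcases hsmall t i hti with h2 | h3
    · rw [hρ.apply_sroot_of_eq_two h2]
      exact ih w le_rfl (cs.length_lt_length_mul_simple_of_eq_two h2 h ht)
    · rw [hρ.apply_sroot_of_eq_three h3, map_add]
      have hwt := ih w le_rfl ht
      by_cases hwi : ℓ w < ℓ (w * s i)
      · exact add_nonneg (ih w le_rfl hwi) hwt
      -- `w α_i + w α_t = (w s_i) α_t`, and `t` is not a descent of the shorter `w s_i`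
      have hv : ℓ (w * s i) < ℓ w := lt_of_le_of_ne (not_lt.mp hwi) (cs.length_mul_simple_ne w i)
      have hvt := cs.length_lt_length_mul_simple_of_eq_three (M.symmetric t i ▸ h3) h ht hv
      rw [← map_add, ← cs.simple_mul_simple_cancel_right (w := w) i, map_mul,
        Module.End.mul_apply, map_add, hρ.apply_sroot_self, hρ.apply_sroot_of_eq_three
        (M.symmetric t i ▸ h3), neg_add_cancel_comm_assoc]
      exact ih _ hv.le hvt

lemma nonpos_of_length_mul_simple_lt (hsmall : SmallType M) (hρ : IsGeomRep M cs ρ) {w : W}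
    {i : S} (h : ℓ (w * s i) < ℓ w) : ρ w (sroot i) ≤ 0 := by
  have h' : ℓ (w * s i) < ℓ (w * s i * s i) := by rwa [cs.simple_mul_simple_cancel_right]
  have := hρ.nonneg_of_length_lt hsmall h'
  rwa [map_mul, Module.End.mul_apply, hρ.apply_sroot_self, map_neg, neg_nonneg] at this

lemma length_lt_iff_nonneg (hsmall : SmallType M) (hρ : IsGeomRep M cs ρ) {w : W} {i : S} :
    ℓ w < ℓ (w * s i) ↔ 0 ≤ ρ w (sroot i) := by
  refine ⟨hρ.nonneg_of_length_lt hsmall, fun hpos => ?_⟩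
  by_contra hlt
  have hdesc : ℓ (w * s i) < ℓ w := lt_of_le_of_ne (not_lt.mp hlt) (cs.length_mul_simple_ne w i)
  exact ne_zero_of_mem_Phi ⟨w, i, rfl⟩
    (le_antisymm (hρ.nonpos_of_length_mul_simple_lt hsmall hdesc) hpos)

lemma mem_PhiPlus_of_length_lt (hsmall : SmallType M) (hρ : IsGeomRep M cs ρ) {w : W} {i : S}
    (h : ℓ w < ℓ (w * s i)) : ρ w (sroot i) ∈ PhiPlus ρ :=
  ⟨⟨w, i, rfl⟩, hρ.nonneg_of_length_lt hsmall h⟩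

lemma mem_PhiPlus_or_mem_PhiMinus (hsmall : SmallType M) (hρ : IsGeomRep M cs ρ)
    {u : S → ℝ} (hu : u ∈ Phi ρ) : u ∈ PhiPlus ρ ∨ u ∈ PhiMinus ρ := by
  obtain ⟨w, i, rfl⟩ := hu
  rcases cs.length_mul_simple w i with h | h
  · exact .inl (hρ.mem_PhiPlus_of_length_lt hsmall (by omega))
  · exact .inr ⟨hρ.neg_mem_Phi ⟨w, i, rfl⟩,
      neg_nonneg.mpr (hρ.nonpos_of_length_mul_simple_lt hsmall (by omega))⟩

lemma apply_simple_mem_PhiPlus (hsmall : SmallType M) (hρ : IsGeomRep M cs ρ) {u : S → ℝ}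
    {i : S} (hu : u ∈ PhiPlus ρ) (hne : u ≠ sroot i) : ρ (s i) u ∈ PhiPlus ρ := by
  refine (hρ.mem_PhiPlus_or_mem_PhiMinus hsmall (apply_mem_Phi _ hu.1)).resolve_right
    fun hneg => hne ?_
  -- off the `i`-th coordinate, `s_i u` agrees with `u`
  refine hρ.eq_sroot_of_mem_PhiPlus hu fun j hj => le_antisymm ?_ (hu.2 j)
  simpa [hρ i u, sroot, hj] using hneg.2 j

lemma invSet_mul_simple (hsmall : SmallType M) (hρ : IsGeomRep M cs ρ) {w : W} {i : S}
    (h : ℓ w < ℓ (w * s i)) : invSet ρ (w * s i) = insert (ρ w (sroot i)) (invSet ρ w) := by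
  ext β
  have hinv : ρ (w * s i)⁻¹ β = ρ (s i) (ρ w⁻¹ β) := by
    rw [mul_inv_rev, cs.inv_simple, map_mul, Module.End.mul_apply]
  simp only [invSet, Set.mem_insert_iff, Set.mem_ofPred_eq, hinv]
  constructor
  · rintro ⟨hβ, hneg⟩
    by_cases heq : ρ w⁻¹ β = sroot i
    · exact .inl (by rw [← heq, apply_inv_apply])
    refine .inr ⟨hβ, (hρ.mem_PhiPlus_or_mem_PhiMinus hsmall (apply_mem_Phi _ hβ.1)).resolve_left
      fun hpos => notMem_PhiMinus_of_mem_PhiPlus (hρ.apply_simple_mem_PhiPlus hsmall hpos heq) hneg⟩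
  · rintro (rfl | ⟨hβ, hneg⟩)
    · refine ⟨hρ.mem_PhiPlus_of_length_lt hsmall h, ?_⟩
      rw [inv_apply_apply, hρ.apply_sroot_self, mem_PhiMinus_iff, neg_neg]
      exact sroot_mem_PhiPlus i
    refine ⟨hβ, ?_⟩
    -- `w⁻¹ β ≠ -α_i`, since `β` and `w α_i` are both positive
    have hne : -ρ w⁻¹ β ≠ sroot i := by
      intro heq
      have hβ' : β = -ρ w (sroot i) := by rw [← heq, map_neg, apply_inv_apply, neg_neg]
      refine notMem_PhiMinus_of_mem_PhiPlus hβ ?_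
      rw [mem_PhiMinus_iff, hβ', neg_neg]
      exact hρ.mem_PhiPlus_of_length_lt hsmall h
    rw [mem_PhiMinus_iff, ← map_neg]
    exact hρ.apply_simple_mem_PhiPlus hsmall hneg hne

lemma encard_invSet (hsmall : SmallType M) (hρ : IsGeomRep M cs ρ) (w : W) :
    (invSet ρ w).encard = ℓ w := by
  induction w using cs.induction_on_length with
  | one => simp [invSet_one]
  | mul_simple w i h ih =>
    rw [hρ.invSet_mul_simple hsmall h,
      Set.encard_insert_of_notMem (apply_sroot_notMem_invSet w i), ih w le_rfl]
    rcases cs.length_mul_simple w i with h' | h'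
    · rw [h', Nat.cast_succ]
    · omega

lemma invSet_subset_invSet_mul (hsmall : SmallType M) (hρ : IsGeomRep M cs ρ) {u x : W}
    (h : ℓ (u * x) = ℓ u + ℓ x) : invSet ρ u ⊆ invSet ρ (u * x) := by
  induction x using cs.induction_on_length with
  | one => simp
  | mul_simple x i hx ih =>
    rw [← mul_assoc] at h ⊢
    have := cs.length_mul_le u x
    rcases cs.length_mul_simple x i with _ | _ <;>
      rcases cs.length_mul_simple (u * x) i with _ | _
    all_goals try omega
    rw [hρ.invSet_mul_simple hsmall (by omega)]
    exact (ih x le_rfl (by omega)).trans (Set.subset_insert _ _)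

lemma invSet_subset_of_wle (hsmall : SmallType M) (hρ : IsGeomRep M cs ρ) {u v : W}
    (h : wle cs u v) : invSet ρ u ⊆ invSet ρ v := by
  have h' : ℓ (u * (u⁻¹ * v)) = ℓ u + ℓ (u⁻¹ * v) := by rwa [mul_inv_cancel_left]
  simpa only [mul_inv_cancel_left] using hρ.invSet_subset_invSet_mul hsmall h'

lemma finite_setOf_invSet_subset (hsmall : SmallType M) (hρ : IsGeomRep M cs ρ)
    {A : Set (S → ℝ)} (hA : A.Finite) : {w : W | invSet ρ w ⊆ A}.Finite := by
  refine (cs.finite_setOf_length_le A.ncard).subset fun w hw => ?_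
  have := Set.encard_le_encard hw
  rwa [hρ.encard_invSet hsmall, ← hA.cast_ncard_eq, Nat.cast_le] at this

lemma invSet_mul_simple_mul_simple_of_eq_two (hsmall : SmallType M) (hρ : IsGeomRep M cs ρ)
    {v : W} {i j : S} (h : M i j = 2) (hj : ℓ v < ℓ (v * s j)) :
    invSet ρ (v * s i * s j) = insert (ρ v (sroot j)) (invSet ρ (v * s i)) := by
  have hαj : ρ (v * s i) (sroot j) = ρ v (sroot j) := by
    rw [map_mul, Module.End.mul_apply, hρ.apply_sroot_of_eq_two h]
  have hij : ℓ (v * s i) < ℓ (v * s i * s j) :=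
    (hρ.length_lt_iff_nonneg hsmall).2 (hαj ▸ hρ.nonneg_of_length_lt hsmall hj)
  rw [hρ.invSet_mul_simple hsmall hij, hαj]

lemma invSet_mul_braid_of_eq_three (hsmall : SmallType M) (hρ : IsGeomRep M cs ρ)
    {v : W} {i j : S} (h : M i j = 3) (hi : ℓ v < ℓ (v * s i)) (hj : ℓ v < ℓ (v * s j)) :
    invSet ρ (v * s i * s j * s i) =
      insert (ρ v (sroot j)) (insert (ρ v (sroot j) + ρ v (sroot i)) (invSet ρ (v * s i))) := by
  have hαj : ρ (v * s i) (sroot j) = ρ v (sroot j) + ρ v (sroot i) := by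
    rw [map_mul, Module.End.mul_apply, hρ.apply_sroot_of_eq_three h, map_add]
  have hαi : ρ (v * s i * s j) (sroot i) = ρ v (sroot j) := by
    rw [map_mul, Module.End.mul_apply, hρ.apply_sroot_of_eq_three (M.symmetric i j ▸ h), map_add,
      hαj, map_mul, Module.End.mul_apply, hρ.apply_sroot_self, map_neg, neg_add_cancel_comm_assoc]
  have hij : ℓ (v * s i) < ℓ (v * s i * s j) := (hρ.length_lt_iff_nonneg hsmall).2
    (hαj ▸ add_nonneg (hρ.nonneg_of_length_lt hsmall hj) (hρ.nonneg_of_length_lt hsmall hi))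
  have hiji : ℓ (v * s i * s j) < ℓ (v * s i * s j * s i) :=
    (hρ.length_lt_iff_nonneg hsmall).2 (hαi ▸ hρ.nonneg_of_length_lt hsmall hj)
  rw [hρ.invSet_mul_simple hsmall hiji, hαi, hρ.invSet_mul_simple hsmall hij, hαj]

lemma invSet_mul_altProd_subset (hsmall : SmallType M) (hρ : IsGeomRep M cs ρ)
    {A : Set (S → ℝ)} (hA : ∀ a ∈ A, ∀ b ∈ A, form M a b = -1 → a + b ∈ A)
    {v : W} {i j : S} (hi : ℓ v < ℓ (v * s i)) (hj : ℓ v < ℓ (v * s j))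
    (hAi : invSet ρ (v * s i) ⊆ A) (hAj : invSet ρ (v * s j) ⊆ A) :
    invSet ρ (v * altProd (s i) (s j) (M i j)) ⊆ A := by
  have hvi : ρ v (sroot i) ∈ A := hAi (hρ.invSet_mul_simple hsmall hi ▸ Set.mem_insert _ _)
  have hvj : ρ v (sroot j) ∈ A := hAj (hρ.invSet_mul_simple hsmall hj ▸ Set.mem_insert _ _)
  obtain rfl | hij := eq_or_ne i j
  · simpa [altProd] using hAi
  rcases hsmall i j hij with h | h
  · rw [h, show altProd (s i) (s j) 2 = s i * s j by simp [altProd], ← mul_assoc,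
      hρ.invSet_mul_simple_mul_simple_of_eq_two hsmall h hj]
    exact Set.insert_subset hvj hAi
  · rw [h, show altProd (s i) (s j) 3 = s i * s j * s i by simp [altProd, mul_assoc],
      ← mul_assoc, ← mul_assoc, hρ.invSet_mul_braid_of_eq_three hsmall h hi hj]
    have hform : form M (ρ v (sroot j)) (ρ v (sroot i)) = -1 := by
      rw [hρ.form_apply, form_sroot_sroot, formEnt_of_eq_three (M.symmetric i j ▸ h)]
    exact Set.insert_subset hvj (Set.insert_subset (hA _ hvj _ hvi hform) hAi)

end IsGeomRep

/-- **Proposition 2.8.** -/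
theorem stmt6 {S : Type} [DecidableEq S] [Fintype S] {W : Type} [Group W]
    (M : CoxeterMatrix S) (hsmall : SmallType M) (cs : CoxeterSystem M W)
    (rho : W →* ((S → ℝ) →ₗ[ℝ] (S → ℝ))) (hrho : IsGeomRep M cs rho)
    (A : Set (S → ℝ)) (hA : ClosedSub M rho A) :
    {w : W | invSet rho w ⊆ A}.Finite ∧
    (∀ u v : W, wle cs u v → invSet rho v ⊆ A → invSet rho u ⊆ A) ∧
    (∀ (v : W) (s t : S),
      cs.length (v * cs.simple s) = cs.length v + 1 →
      cs.length (v * cs.simple t) = cs.length v + 1 →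
      invSet rho (v * cs.simple s) ⊆ A → invSet rho (v * cs.simple t) ⊆ A →
      invSet rho (v * altProd (cs.simple s) (cs.simple t) (M s t)) ⊆ A) := by
  obtain ⟨-, hAfin, -, hAclosed⟩ := hA
  exact ⟨hrho.finite_setOf_invSet_subset hsmall hAfin,
    fun u v huv hv => (hrho.invSet_subset_of_wle hsmall huv).trans hv,
    fun v s t hs ht => hrho.invSet_mul_altProd_subset hsmall hAclosed (by omega) (by omega)⟩

end ArtinInj
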